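/- arXiv:2105.09757 — 2 statements merged into one kernel-verified Lean document; each statement's English description precedes it below -/
import Mathlib

section
/- Let $(w,v)$ be a pair of weights on $\mathbb{R}^n$ in $A_1^+(\mathcal{R})$ with constant $C$, i.e. for every cube $Q$ and every measurable $E\subset Q^+$ with $|E|>0$, $|E|/|Q| \le C\, v(E)/w(Q)$. Then $M^- w(x) \le C\, v(x)$ for almost every $x \in \mathbb{R}^n$, so $(w,v)\in A_1^+$. -/
open MeasureTheory Set ENNReal

noncomputable section

/-- The half-open cube `∏ᵢ [aᵢ, aᵢ + h)` in `ℝⁿ`. -/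
def cube {n : ℕ} (a : Fin n → ℝ) (h : ℝ) : Set (Fin n → ℝ) :=
  Set.univ.pi fun i => Set.Ico (a i) (a i + h)

/-- The forward adjacent cube `Q⁺ = ∏ᵢ [aᵢ + h, aᵢ + 2h)`. -/
def cubePlus {n : ℕ} (a : Fin n → ℝ) (h : ℝ) : Set (Fin n → ℝ) :=
  Set.univ.pi fun i => Set.Ico (a i + h) (a i + 2 * h)

/-- The backward cube `Q_{x,h⁻} = ∏ᵢ [xᵢ - h, xᵢ)`. -/
def backCube {n : ℕ} (x : Fin n → ℝ) (h : ℝ) : Set (Fin n → ℝ) :=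
  Set.univ.pi fun i => Set.Ico (x i - h) (x i)

/-- The one-sided (backward) Hardy–Littlewood maximal operator. -/
def Mminus {n : ℕ} (w : (Fin n → ℝ) → ℝ≥0∞) (x : Fin n → ℝ) : ℝ≥0∞ :=
  ⨆ (h : ℝ) (_ : 0 < h), (∫⁻ y in backCube x h, w y) / volume (backCube x h)

/-! Testing the hypothesis on all measurable `E ⊆ Q⁺` gives `w(Q) |E| ≤ C v(E) |Q|`, so the average
of `w` over a fixed cube `Q` is at most `C v` almost everywhere on `Q⁺`. Discarding one null set for
each of the countably many rational cubes leaves points `x` at which this holds for every rational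
`Q` with `x ∈ Q⁺`. Such a `Q` lies before `x`, so it cannot contain `Q_{x,h⁻}`; but it can contain
the truncation `∏ᵢ [xᵢ - h, xᵢ - δ)` while having side arbitrarily close to `h`. Exhausting
`Q_{x,h⁻}` by truncations gives `∫_{Q_{x,h⁻}} w ≤ C v(x) hⁿ`, i.e. `M⁻w(x) ≤ C v(x)`. -/

lemma ENNReal.mul_le_mul_mul_of_div_le_mul_div {a b c d e : ℝ≥0∞} (ha : a ≠ 0) (hb0 : b ≠ 0)
    (hb : b ≠ ⊤) (h : a / b ≤ c * (d / e)) : e * a ≤ c * d * b := by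
  rcases eq_or_ne e ⊤ with rfl | he
  · simp_all [ENNReal.div_eq_zero_iff]
  rcases eq_or_ne e 0 with rfl | he0
  · simp
  calc e * a ≤ e * (c * (d / e) * b) :=
        mul_le_mul_right ((ENNReal.div_le_iff_le_mul (Or.inl hb0) (Or.inl hb)).1 h) e
    _ = c * d * b := by
        rw [mul_comm c, mul_assoc, ← mul_assoc e, ENNReal.mul_div_cancel he0 he]; ring

theorem MeasureTheory.ae_setLIntegral_le_mul_of_forall_div_le {α : Type*} [MeasurableSpace α]
    {μ : Measure α} [SigmaFinite μ] {Q P : Set α} (hP : MeasurableSet P) (hQ0 : μ Q ≠ 0)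
    (hQ : μ Q ≠ ⊤) {c : ℝ≥0∞} (hc : c ≠ ⊤) {w v : α → ℝ≥0∞}
    (h : ∀ E ⊆ P, MeasurableSet E → 0 < μ E →
      μ E / μ Q ≤ c * ((∫⁻ x in E, v x ∂μ) / ∫⁻ x in Q, w x ∂μ)) :
    ∀ᵐ x ∂μ, x ∈ P → ∫⁻ y in Q, w y ∂μ ≤ c * v x * μ Q := by
  refine (ae_restrict_iff' hP).1 <| ae_le_of_forall_setLIntegral_le_of_sigmaFinite
    measurable_const fun s hs _ => ?_
  rw [Measure.restrict_restrict hs, setLIntegral_const, lintegral_mul_const' _ _ hQ,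
    lintegral_const_mul' _ _ hc]
  rcases eq_or_ne (μ (s ∩ P)) 0 with h0 | h0
  · simp [h0]
  exact ENNReal.mul_le_mul_mul_of_div_le_mul_div h0 hQ0 hQ
    (h _ inter_subset_right (hs.inter hP) (pos_iff_ne_zero.2 h0))

section Cubes

variable {n : ℕ}

lemma volume_cube (a : Fin n → ℝ) (h : ℝ) : volume (cube a h) = ENNReal.ofReal h ^ n := by
  simp [cube, volume_pi_pi, Real.volume_Ico]

lemma volume_backCube (x : Fin n → ℝ) (h : ℝ) :
    volume (backCube x h) = ENNReal.ofReal h ^ n := by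
  simp [backCube, volume_pi_pi, Real.volume_Ico]

lemma measurableSet_cubePlus (a : Fin n → ℝ) (h : ℝ) : MeasurableSet (cubePlus a h) :=
  .univ_pi fun _ => measurableSet_Ico

lemma measurableSet_backCube (x : Fin n → ℝ) (h : ℝ) : MeasurableSet (backCube x h) :=
  .univ_pi fun _ => measurableSet_Ico

lemma Mminus_le_iff {w : (Fin n → ℝ) → ℝ≥0∞} {x : Fin n → ℝ} {c : ℝ≥0∞} :
    Mminus w x ≤ c ↔ ∀ h, 0 < h → ∫⁻ y in backCube x h, w y ≤ c * ENNReal.ofReal h ^ n := by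
  simp only [Mminus, iSup_le_iff]
  refine forall₂_congr fun h hh => ?_
  rw [volume_backCube, ENNReal.div_le_iff_le_mul
    (Or.inl (pow_ne_zero _ (ENNReal.ofReal_pos.2 hh).ne'))
    (Or.inl (ENNReal.pow_ne_top ENNReal.ofReal_ne_top))]

lemma exists_rat_cube_superset_backCube (x : Fin n → ℝ) {h δ r : ℝ} (hδ : 0 < δ) (hr : 0 < r)
    (hhr : h ≤ r) : ∃ a : Fin n → ℚ, x ∈ cubePlus (fun i => (a i : ℝ)) r ∧
      backCube (fun i => x i - δ) (h - δ) ⊆ cube (fun i => (a i : ℝ)) r := by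
  have hex : ∀ i, ∃ q : ℚ, max (x i - r - δ) (x i - 2 * r) < q ∧ (q : ℝ) < x i - r :=
    fun i => exists_rat_btwn (max_lt (by linarith) (by linarith))
  choose a hlo hhi using hex
  refine ⟨a, fun i _ => ⟨?_, ?_⟩, fun y hy i _ => ⟨?_, ?_⟩⟩
  all_goals
    have := max_lt_iff.1 (hlo i)
    have := hhi i
  · linarith
  · linarith
  · have := (hy i trivial).1; linarith
  · have := (hy i trivial).2; linarith

lemma monotone_backCube_shrink (x : Fin n → ℝ) (h : ℝ) :
    Monotone fun k : ℕ => backCube (fun i => x i - 1 / (k + 1 : ℝ)) (h - 1 / (k + 1 : ℝ)) := by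
  intro k l hkl y hy i _
  have hlk : 1 / (l + 1 : ℝ) ≤ 1 / (k + 1 : ℝ) := Nat.one_div_le_one_div hkl
  have := hy i trivial
  simp only [mem_Ico] at this ⊢
  constructor <;> linarith

lemma iUnion_backCube_shrink (x : Fin n → ℝ) (h : ℝ) :
    ⋃ k : ℕ, backCube (fun i => x i - 1 / (k + 1 : ℝ)) (h - 1 / (k + 1 : ℝ)) = backCube x h := by
  refine subset_antisymm (iUnion_subset fun k y hy i _ => ?_) fun y hy => ?_
  · have := hy i trivial
    have : 0 < 1 / (k + 1 : ℝ) := Nat.one_div_pos_of_nat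
    simp only [mem_Ico] at *
    constructor <;> linarith
  · have hev : ∀ᶠ k : ℕ in Filter.atTop, ∀ i, 1 / (k + 1 : ℝ) < x i - y i :=
      Filter.eventually_all.2 fun i => tendsto_one_div_add_atTop_nhds_zero_nat.eventually_lt_const
        (by linarith [(hy i trivial).2])
    obtain ⟨k, hk⟩ := hev.exists
    refine mem_iUnion.2 ⟨k, fun i _ => ?_⟩
    have := hy i trivial
    have := hk i
    simp only [mem_Ico] at *
    constructor <;> linarith

open Filter Topology in
lemma setLIntegral_backCube_le_of_forall_rat_cube {w : (Fin n → ℝ) → ℝ≥0∞} {x : Fin n → ℝ}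
    {c : ℝ≥0∞} (hc : ∀ (a : Fin n → ℚ) (r : ℚ), 0 < r → x ∈ cubePlus (fun i => (a i : ℝ)) r →
      ∫⁻ y in cube (fun i => (a i : ℝ)) r, w y ≤ c * ENNReal.ofReal r ^ n)
    {h : ℝ} (hh : 0 < h) : ∫⁻ y in backCube x h, w y ≤ c * ENNReal.ofReal h ^ n := by
  set S := fun k : ℕ => backCube (fun i => x i - 1 / (k + 1 : ℝ)) (h - 1 / (k + 1 : ℝ))
  have hbound (k : ℕ) : ∫⁻ y in S k, w y ≤ c * ENNReal.ofReal (h + 1 / (k + 1)) ^ n := by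
    obtain ⟨r, hhr, hr⟩ := exists_rat_btwn (lt_add_of_pos_right h Nat.one_div_pos_of_nat)
    obtain ⟨a, hxa, hsub⟩ :=
      exists_rat_cube_superset_backCube x Nat.one_div_pos_of_nat (hh.trans hhr) hhr.le
    calc ∫⁻ y in S k, w y ≤ ∫⁻ y in cube (fun i => (a i : ℝ)) r, w y := lintegral_mono_set hsub
      _ ≤ c * ENNReal.ofReal r ^ n := hc a r (mod_cast hh.trans hhr) hxa
      _ ≤ c * ENNReal.ofReal (h + 1 / (k + 1)) ^ n := by gcongr
  have hleft : Tendsto (fun k => ∫⁻ y in S k, w y) atTop (𝓝 (∫⁻ y in backCube x h, w y)) := by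
    have := tendsto_measure_iUnion_atTop (μ := volume.withDensity w) (monotone_backCube_shrink x h)
    simpa only [iUnion_backCube_shrink, Function.comp_def,
      withDensity_apply _ (measurableSet_backCube _ _)] using this
  have hright : Tendsto (fun k : ℕ => c * ENNReal.ofReal (h + 1 / (k + 1)) ^ n) atTop
      (𝓝 (c * ENNReal.ofReal h ^ n)) := by
    refine ENNReal.Tendsto.const_mul ?_ (Or.inl (pow_ne_zero _ (ENNReal.ofReal_pos.2 hh).ne'))
    have := (tendsto_one_div_add_atTop_nhds_zero_nat (𝕜 := ℝ)).const_add h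
    rw [add_zero] at this
    exact ENNReal.Tendsto.pow ((ENNReal.continuous_ofReal.tendsto h).comp this)
  exact le_of_tendsto_of_tendsto' hleft hright hbound

def RestrictedA1Plus (C : ℝ) (w v : (Fin n → ℝ) → ℝ≥0∞) : Prop :=
  ∀ (a : Fin n → ℝ) (h : ℝ), 0 < h → ∀ E ⊆ cubePlus a h, MeasurableSet E → 0 < volume E →
    volume E / volume (cube a h) ≤ ENNReal.ofReal C * ((∫⁻ x in E, v x) / ∫⁻ x in cube a h, w x)

lemma RestrictedA1Plus.ae_forall_rat_cube {C : ℝ} {w v : (Fin n → ℝ) → ℝ≥0∞}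
    (hA : RestrictedA1Plus C w v) :
    ∀ᵐ x, ∀ (a : Fin n → ℚ) (r : ℚ), 0 < r → x ∈ cubePlus (fun i => (a i : ℝ)) r →
      ∫⁻ y in cube (fun i => (a i : ℝ)) r, w y ≤ ENNReal.ofReal C * v x * ENNReal.ofReal r ^ n := by
  simp only [ae_all_iff, Filter.eventually_imp_distrib_left]
  intro a r hr
  have hr : (0 : ℝ) < r := mod_cast hr
  have hQ := volume_cube (fun i => (a i : ℝ)) r
  rw [← hQ]
  exact ae_setLIntegral_le_mul_of_forall_div_le (measurableSet_cubePlus _ _)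
    (hQ ▸ pow_ne_zero _ (ENNReal.ofReal_pos.2 hr).ne')
    (hQ ▸ ENNReal.pow_ne_top ENNReal.ofReal_ne_top) ENNReal.ofReal_ne_top (hA _ _ hr)

end Cubes

theorem restricted_A1_subset_A1_plus_general {n : ℕ} (C : ℝ)
    (w v : (Fin n → ℝ) → ℝ≥0∞)
    (hA1R : ∀ (a : Fin n → ℝ) (h : ℝ), 0 < h → ∀ E ⊆ cubePlus a h,
      MeasurableSet E → 0 < volume E →
      volume E / volume (cube a h)
        ≤ ENNReal.ofReal C * ((∫⁻ x in E, v x) / ∫⁻ x in cube a h, w x)) :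
    ∀ᵐ x : Fin n → ℝ, Mminus w x ≤ ENNReal.ofReal C * v x := by
  filter_upwards [RestrictedA1Plus.ae_forall_rat_cube hA1R] with x hx
  exact Mminus_le_iff.2 fun h hh => setLIntegral_backCube_le_of_forall_rat_cube hx hh

/-- If `(w,v) ∈ A₁⁺(𝓡)` with constant `C`, i.e. `|E|/|Q| ≤ C v(E)/w(Q)` for every
cube `Q` and every measurable `E ⊆ Q⁺` with `|E| > 0`, then `M⁻w ≤ C v` a.e.,
so `(w,v) ∈ A₁⁺`. -/
theorem restricted_A1_subset_A1_plus {n : ℕ} (C : ℝ) (hC : 0 ≤ C)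
    (w v : (Fin n → ℝ) → ℝ≥0∞) (hw : Measurable w) (hv : Measurable v)
    (hA1R : ∀ (a : Fin n → ℝ) (h : ℝ), 0 < h → ∀ E ⊆ cubePlus a h,
      MeasurableSet E → 0 < volume E →
      volume E / volume (cube a h)
        ≤ ENNReal.ofReal C * ((∫⁻ x in E, v x) / ∫⁻ x in cube a h, w x)) :
    ∀ᵐ x : Fin n → ℝ, Mminus w x ≤ ENNReal.ofReal C * v x :=
  restricted_A1_subset_A1_plus_general C w v hA1R
end
end

section
/- Let $1\le p<\infty$ and let $(w,v)\in A_p^{+,d}(\mathcal{R})$ on $\mathbb{R}^n$. Then there exists a constant $C$ depending only on $n$ and $p$ such that for every $t>0$ and every measurable set $E$, $w(\{x\in\mathbb{R}^n : M^{+,d}(\mathcal{X}_E)(x)>t\}) \le C [(w,v)]_{A_p^{+,d}(\mathcal{R})}^p t^{-p} v(E)$. -/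
open MeasureTheory Set ENNReal

noncomputable section

/-- The dyadic cube with corner `m * 2^k` and side `2^k`. -/
def dyCube {n : ℕ} (k : ℤ) (m : Fin n → ℤ) : Set (Fin n → ℝ) :=
  cube (fun i => (m i : ℝ) * 2 ^ k) (2 ^ k)

/-- The forward adjacent cube of a dyadic cube. -/
def dyCubePlus {n : ℕ} (k : ℤ) (m : Fin n → ℤ) : Set (Fin n → ℝ) :=
  cubePlus (fun i => (m i : ℝ) * 2 ^ k) (2 ^ k)

/-- The dyadic one-sided maximal function of the characteristic function of `E`:
`M^{+,d}(χ_E)(x) = sup { |E ∩ Q⁺| / |Q| : Q dyadic cube containing x }`. -/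
def Mplusd {n : ℕ} (E : Set (Fin n → ℝ)) (x : Fin n → ℝ) : ℝ≥0∞ :=
  ⨆ (k : ℤ) (m : Fin n → ℤ) (_ : x ∈ dyCube k m),
    volume (E ∩ dyCubePlus k m) / volume (dyCube k m)

/-!
Fix `t` and `E`, and cover the level set by the maximal dyadic cubes `Q` with
`|E ∩ Q⁺| > t |Q|`. Applied to a set `A ⊆ E ∩ Q⁺` with `|A| = 2^{-n-1} t |Q|`, the
`A_p^{+,d}` condition gives `w(Q) ≤ (2^{n+1} / t)^p K^p v(A)`, so it suffices to choose these
sets `A = A_Q` pairwise disjoint. They are chosen greedily from the smallest cubes up: the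
pieces already taken inside `Q⁺` belong to disjoint smaller cubes `Q'` with `Q'⁺` meeting `Q⁺`,
which all lie in the cube with the same corner as `Q` and twice its side, so together they
occupy at most `t |Q| / 2` of the more than `t |Q|` available in `E ∩ Q⁺`.
-/

variable {n : ℕ}

lemma mem_dyCube {k : ℤ} {m : Fin n → ℤ} {x : Fin n → ℝ} :
    x ∈ dyCube k m ↔ ∀ i, (m i : ℝ) * 2 ^ k ≤ x i ∧ x i < m i * 2 ^ k + 2 ^ k := by
  simp [dyCube, cube]

lemma mem_dyCube_iff_floor {k : ℤ} {m : Fin n → ℤ} {x : Fin n → ℝ} :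
    x ∈ dyCube k m ↔ (fun i => ⌊x i / 2 ^ k⌋) = m := by
  have h2k : (0 : ℝ) < 2 ^ k := by positivity
  simp only [mem_dyCube, funext_iff, Int.floor_eq_iff, le_div_iff₀ h2k, div_lt_iff₀ h2k,
    add_mul, one_mul]

lemma floor_div_two_zpow_of_le (x : ℝ) {k' k : ℤ} (hk : k' ≤ k) :
    ⌊x / 2 ^ k⌋ = ⌊x / 2 ^ k'⌋ / 2 ^ (k - k').toNat := by
  have h : (2 : ℝ) ^ k = 2 ^ k' * ((2 ^ (k - k').toNat : ℕ) : ℝ) := by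
    rw [Nat.cast_pow, Nat.cast_ofNat, ← zpow_natCast, Int.toNat_of_nonneg (by omega),
      ← zpow_add₀ two_ne_zero, add_sub_cancel]
  rw [h, ← div_div, Int.floor_div_natCast]
  push_cast
  rfl

lemma dyCube_subset_of_le {k' k : ℤ} (hk : k' ≤ k) {m' m : Fin n → ℤ}
    (hne : (dyCube k' m' ∩ dyCube k m).Nonempty) : dyCube k' m' ⊆ dyCube k m := by
  obtain ⟨x, hx', hx⟩ := hne
  intro y hy
  rw [mem_dyCube_iff_floor] at hx' hx hy ⊢
  subst hx' hx
  funext i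
  rw [floor_div_two_zpow_of_le _ hk, floor_div_two_zpow_of_le (x i) hk, congrFun hy i]

lemma eq_of_dyCube_inter_nonempty {k : ℤ} {m m' : Fin n → ℤ}
    (hne : (dyCube k m ∩ dyCube k m').Nonempty) : m = m' := by
  obtain ⟨x, hx, hx'⟩ := hne
  rw [mem_dyCube_iff_floor] at hx hx'
  exact hx.symm.trans hx'

lemma dyCubePlus_eq (k : ℤ) (m : Fin n → ℤ) : dyCubePlus k m = dyCube k (m + 1) := by
  ext x
  simp only [dyCubePlus, cubePlus, mem_dyCube, mem_pi, mem_univ, mem_Ico, true_imp_iff,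
    Pi.add_apply, Pi.one_apply, Int.cast_add, Int.cast_one]
  constructor <;> intro h i <;> constructor <;> linarith [h i]

lemma dyCube_nonempty (k : ℤ) (m : Fin n → ℤ) : (dyCube k m).Nonempty :=
  ⟨fun i => m i * 2 ^ k, mem_dyCube.2 fun _ => ⟨le_rfl, by simp; positivity⟩⟩

lemma disjoint_dyCubePlus_of_fst_eq {q q' : ℤ × (Fin n → ℤ)} (hk : q.1 = q'.1) (hne : q ≠ q') :
    Disjoint (dyCubePlus q.1 q.2) (dyCubePlus q'.1 q'.2) := by
  refine disjoint_left.2 fun x hx hx' => hne (Prod.ext hk ?_)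
  rw [dyCubePlus_eq, hk] at hx
  rw [dyCubePlus_eq] at hx'
  exact add_right_cancel (eq_of_dyCube_inter_nonempty ⟨x, hx, hx'⟩)

lemma measurableSet_cube (a : Fin n → ℝ) (h : ℝ) : MeasurableSet (cube a h) :=
  MeasurableSet.univ_pi fun _ => measurableSet_Ico

lemma measurableSet_dyCube (k : ℤ) (m : Fin n → ℤ) : MeasurableSet (dyCube k m) :=
  measurableSet_cube _ _

lemma measurableSet_dyCubePlus (k : ℤ) (m : Fin n → ℤ) : MeasurableSet (dyCubePlus k m) :=
  dyCubePlus_eq k m ▸ measurableSet_dyCube _ _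

lemma volume_dyCube (k : ℤ) (m : Fin n → ℤ) :
    volume (dyCube k m) = ENNReal.ofReal (2 ^ k) ^ n :=
  volume_cube _ _

lemma dyCube_subset_cube_of_dyCubePlus_inter {k' k : ℤ} (hk : k' ≤ k) {m' m : Fin n → ℤ}
    (hne : (dyCubePlus k' m' ∩ dyCubePlus k m).Nonempty) :
    dyCube k' m' ⊆ cube (fun i => m i * 2 ^ k) (2 * 2 ^ k) := by
  rw [dyCubePlus_eq, dyCubePlus_eq] at hne
  have hsub := dyCube_subset_of_le hk hne
  have hle : (2 : ℝ) ^ k' ≤ 2 ^ k := zpow_le_zpow_right₀ one_le_two hk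
  intro y hy
  -- shifted by the side of `Q'`, the point `y` lies in `Q'⁺ ⊆ Q⁺`
  have hshift : (fun i => y i + 2 ^ k') ∈ dyCube k (m + 1) := by
    refine hsub (mem_dyCube.2 fun i => ?_)
    have := mem_dyCube.1 hy i
    simp only [Pi.add_apply, Pi.one_apply, Int.cast_add, Int.cast_one]
    constructor <;> linarith
  simp only [cube, mem_pi, mem_univ, mem_Ico, true_imp_iff]
  intro i
  have h1 := mem_dyCube.1 hshift i
  have h2 : (0 : ℝ) < 2 ^ k' := by positivity
  simp only [Pi.add_apply, Pi.one_apply, Int.cast_add, Int.cast_one] at h1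
  constructor <;> linarith

def maximalCubes (S : Set (ℤ × (Fin n → ℤ))) : Set (ℤ × (Fin n → ℤ)) :=
  {q | q ∈ S ∧ ∀ q' ∈ S, (dyCube q.1 q.2 ∩ dyCube q'.1 q'.2).Nonempty → q'.1 ≤ q.1}

lemma pairwiseDisjoint_maximalCubes (S : Set (ℤ × (Fin n → ℤ))) :
    (maximalCubes S).PairwiseDisjoint fun q => dyCube q.1 q.2 := by
  intro q hq q' hq' hne
  refine disjoint_iff_inter_eq_empty.2 (not_nonempty_iff_eq_empty.1 fun hmeet => ?_)
  change (dyCube q.1 q.2 ∩ dyCube q'.1 q'.2).Nonempty at hmeet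
  have hk : q.1 = q'.1 :=
    le_antisymm (hq'.2 q hq.1 (inter_comm _ _ ▸ hmeet)) (hq.2 q' hq'.1 hmeet)
  rw [hk] at hmeet
  exact hne (Prod.ext hk (eq_of_dyCube_inter_nonempty hmeet))

lemma exists_maximalCubes_superset {S : Set (ℤ × (Fin n → ℤ))} {j : ℤ} (hS : ∀ q ∈ S, q.1 ≤ j)
    {q₀ : ℤ × (Fin n → ℤ)} (hq₀ : q₀ ∈ S) :
    ∃ q ∈ maximalCubes S, dyCube q₀.1 q₀.2 ⊆ dyCube q.1 q.2 := by
  obtain ⟨x, hx⟩ := dyCube_nonempty q₀.1 q₀.2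
  let cubeAt (k : ℤ) : ℤ × (Fin n → ℤ) := (k, fun i => ⌊x i / 2 ^ k⌋)
  have hx_mem (k : ℤ) : x ∈ dyCube (cubeAt k).1 (cubeAt k).2 := mem_dyCube_iff_floor.2 rfl
  have hq₀_eq : cubeAt q₀.1 = q₀ := Prod.ext rfl (mem_dyCube_iff_floor.1 hx)
  obtain ⟨k, hkS, hk_max⟩ := Int.exists_greatest_of_bdd (P := fun k => cubeAt k ∈ S)
    ⟨j, fun k hk => hS _ hk⟩ ⟨q₀.1, hq₀_eq ▸ hq₀⟩
  refine ⟨cubeAt k, ⟨hkS, fun q' hq' hmeet => ?_⟩, ?_⟩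
  · by_contra! hlt
    have hx' : x ∈ dyCube q'.1 q'.2 := dyCube_subset_of_le hlt.le hmeet (hx_mem k)
    have hq'_eq : cubeAt q'.1 = q' := Prod.ext rfl (mem_dyCube_iff_floor.1 hx')
    exact hlt.not_ge (hk_max q'.1 (hq'_eq ▸ hq'))
  · exact dyCube_subset_of_le (hk_max q₀.1 (hq₀_eq ▸ hq₀)) ⟨x, hx, hx_mem k⟩

section GreedyPacking

variable {α ι : Type*} [MeasurableSpace α] (μ : Measure α)

open Classical in
def subsetOfMeasure (S : Set α) (r : ℝ≥0∞) : Set α :=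
  if h : ∃ A ⊆ S, MeasurableSet A ∧ μ A = r then h.choose else ∅

lemma subsetOfMeasure_subset (S : Set α) (r : ℝ≥0∞) : subsetOfMeasure μ S r ⊆ S := by
  unfold subsetOfMeasure
  split_ifs with h
  exacts [h.choose_spec.1, empty_subset S]

lemma measurableSet_subsetOfMeasure (S : Set α) (r : ℝ≥0∞) :
    MeasurableSet (subsetOfMeasure μ S r) := by
  unfold subsetOfMeasure
  split_ifs with h
  exacts [h.choose_spec.2.1, .empty]

lemma measure_subsetOfMeasure_le (S : Set α) (r : ℝ≥0∞) : μ (subsetOfMeasure μ S r) ≤ r := by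
  unfold subsetOfMeasure
  split_ifs with h
  exacts [h.choose_spec.2.2.le, by simp]

lemma measure_subsetOfMeasure {S : Set α} {r : ℝ≥0∞}
    (h : ∃ A ⊆ S, MeasurableSet A ∧ μ A = r) : μ (subsetOfMeasure μ S r) = r := by
  rw [subsetOfMeasure, dif_pos h]
  exact h.choose_spec.2.2

variable (I : Set ι) (ℓ : ι → ℕ) (T : ι → Set α) (τ : ι → ℝ≥0∞)

def greedyPiece (q : ι) : Set α :=
  subsetOfMeasure μ (T q \ ⋃ (q' ∈ I) (_ : ℓ q' < ℓ q), greedyPiece q') (τ q)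
termination_by ℓ q

lemma greedyPiece_subset (q : ι) :
    greedyPiece μ I ℓ T τ q ⊆ T q \ ⋃ (q' ∈ I) (_ : ℓ q' < ℓ q), greedyPiece μ I ℓ T τ q' := by
  rw [greedyPiece]
  exact subsetOfMeasure_subset μ _ _

lemma measurableSet_greedyPiece (q : ι) : MeasurableSet (greedyPiece μ I ℓ T τ q) := by
  rw [greedyPiece]
  exact measurableSet_subsetOfMeasure μ _ _

lemma measure_greedyPiece_le (q : ι) : μ (greedyPiece μ I ℓ T τ q) ≤ τ q := by
  rw [greedyPiece]
  exact measure_subsetOfMeasure_le μ _ _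

variable {μ I ℓ T τ}

lemma pairwiseDisjoint_greedyPiece
    (hdisj : ∀ q ∈ I, ∀ q' ∈ I, q ≠ q' → ℓ q = ℓ q' → Disjoint (T q) (T q')) :
    I.PairwiseDisjoint (greedyPiece μ I ℓ T τ) := by
  have avoid_lower {q q'} (hq : q ∈ I) (hlt : ℓ q < ℓ q') :
      Disjoint (greedyPiece μ I ℓ T τ q) (greedyPiece μ I ℓ T τ q') := by
    refine Disjoint.symm (disjoint_left.2 fun x hx' hx => ?_)
    exact (greedyPiece_subset μ I ℓ T τ q' hx').2 (mem_biUnion hq (mem_iUnion.2 ⟨hlt, hx⟩))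
  intro q hq q' hq' hne
  rcases lt_trichotomy (ℓ q) (ℓ q') with hlt | heq | hlt
  · exact avoid_lower hq hlt
  · exact (hdisj q hq q' hq' hne heq).mono
      ((greedyPiece_subset μ I ℓ T τ q).trans sdiff_subset)
      ((greedyPiece_subset μ I ℓ T τ q').trans sdiff_subset)
  · exact (avoid_lower hq' hlt).symm

lemma measure_greedyPiece [Countable ι] (hT : ∀ q ∈ I, MeasurableSet (T q))
    (hT_fin : ∀ q ∈ I, μ (T q) ≠ ∞)
    (hroom : ∀ q ∈ I,
      τ q + ∑' q' : {q' | q' ∈ I ∧ ℓ q' < ℓ q ∧ (T q' ∩ T q).Nonempty}, τ q' ≤ μ (T q))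
    (hsplit : ∀ q ∈ I, ∀ S ⊆ T q, MeasurableSet S → τ q ≤ μ S →
      ∃ A ⊆ S, MeasurableSet A ∧ μ A = τ q)
    {q : ι} (hq : q ∈ I) : μ (greedyPiece μ I ℓ T τ q) = τ q := by
  set U := ⋃ (q' ∈ I) (_ : ℓ q' < ℓ q), greedyPiece μ I ℓ T τ q'
  set D := {q' | q' ∈ I ∧ ℓ q' < ℓ q ∧ (T q' ∩ T q).Nonempty}
  have hU : MeasurableSet U := .biUnion (to_countable I) fun q' _ =>
    .iUnion fun _ => measurableSet_greedyPiece μ I ℓ T τ q'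
  have hused : μ (T q ∩ U) ≤ ∑' q' : D, τ q' := by
    have hcover : T q ∩ U ⊆ ⋃ q' ∈ D, greedyPiece μ I ℓ T τ q' := by
      rintro x ⟨hxT, hxU⟩
      simp only [U, mem_iUnion] at hxU
      obtain ⟨q', hq', hlt, hx⟩ := hxU
      have hxT' := (greedyPiece_subset μ I ℓ T τ q' hx).1
      exact mem_biUnion ⟨hq', hlt, x, hxT', hxT⟩ hx
    calc μ (T q ∩ U) ≤ ∑' q' : D, μ (greedyPiece μ I ℓ T τ q') :=
          (measure_mono hcover).trans (measure_biUnion_le μ (to_countable D) _)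
      _ ≤ ∑' q' : D, τ q' := ENNReal.tsum_le_tsum fun q' => measure_greedyPiece_le μ I ℓ T τ q'
  have hsum_fin : ∑' q' : D, τ q' ≠ ∞ :=
    ne_top_of_le_ne_top (hT_fin q hq) (le_add_self.trans (hroom q hq))
  have hfree : τ q ≤ μ (T q \ U) := by
    refine (ENNReal.add_le_add_iff_right hsum_fin).1 ?_
    calc τ q + ∑' q' : D, τ q' ≤ μ (T q) := hroom q hq
      _ ≤ μ (T q \ U) + μ (T q ∩ U) := by
          rw [add_comm]; exact measure_le_inter_add_sdiff μ (T q) U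
      _ ≤ μ (T q \ U) + ∑' q' : D, τ q' := by gcongr
  rw [greedyPiece]
  exact measure_subsetOfMeasure μ
    (hsplit q hq _ sdiff_subset ((hT q hq).diff hU) hfree)

end GreedyPacking

lemma volume_cube_inter_slab_le (i₀ : Fin n) (a : Fin n → ℝ) (h c c' : ℝ) :
    volume (cube a h ∩ {x | x i₀ ∈ Ico c c'}) ≤
      ENNReal.ofReal (c' - c) * ENNReal.ofReal h ^ (n - 1) := by
  classical
  have hsub : cube a h ∩ {x | x i₀ ∈ Ico c c'} ⊆
      univ.pi (Function.update (fun i => Ico (a i) (a i + h)) i₀ (Ico c c')) := by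
    rintro x ⟨hx, hc⟩ i -
    rcases eq_or_ne i i₀ with rfl | hi
    · simpa using hc
    · simpa [hi] using hx i (mem_univ i)
  refine (measure_mono hsub).trans (le_of_eq ?_)
  simp [volume_pi_pi, Function.apply_update (fun _ => (volume : Measure ℝ)),
    Finset.prod_update_of_mem, Finset.sdiff_singleton_eq_erase, Finset.card_erase_of_mem]

/-- The volume of `S ∩ {x | x i₀ < c}` is Lipschitz in `c`, so by the intermediate value theorem
it takes every value between `0` and `volume S`. -/
lemma exists_subset_volume_eq (i₀ : Fin n) {a : Fin n → ℝ} {h : ℝ} (hh : 0 ≤ h)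
    {S : Set (Fin n → ℝ)} (hS : MeasurableSet S) (hSQ : S ⊆ cube a h) {r : ℝ≥0∞}
    (hr : r ≤ volume S) : ∃ A ⊆ S, MeasurableSet A ∧ volume A = r := by
  let g (c : ℝ) : ℝ≥0∞ := volume (S ∩ {x | x i₀ < c})
  have hg_fin (c : ℝ) : g c ≠ ∞ := by
    refine ne_top_of_le_ne_top ?_ (measure_mono (inter_subset_left.trans hSQ))
    rw [volume_cube]
    exact pow_ne_top ofReal_ne_top
  set L := ENNReal.ofReal h ^ (n - 1)
  have hg_step (c c' : ℝ) : g c' ≤ g c + ENNReal.ofReal (c' - c) * L := by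
    calc g c' ≤ g c + volume (cube a h ∩ {x | x i₀ ∈ Ico c c'}) := by
          refine (measure_mono ?_).trans (measure_union_le _ _)
          rintro x ⟨hxS, hxc'⟩
          by_cases hxc : x i₀ < c
          exacts [Or.inl ⟨hxS, hxc⟩, Or.inr ⟨hSQ hxS, not_lt.1 hxc, hxc'⟩]
      _ ≤ g c + ENNReal.ofReal (c' - c) * L := by
          gcongr; exact volume_cube_inter_slab_le i₀ a h c c'
  have hcont : Continuous fun c => (g c).toReal := by
    refine (LipschitzWith.of_le_add_mul L.toNNReal fun c' c => ?_).continuous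
    have hL : L ≠ ∞ := pow_ne_top ofReal_ne_top
    have hfin : g c + ENNReal.ofReal (c' - c) * L ≠ ∞ :=
      add_ne_top.2 ⟨hg_fin c, mul_ne_top ofReal_ne_top hL⟩
    calc (g c').toReal ≤ (g c + ENNReal.ofReal (c' - c) * L).toReal :=
          toReal_mono hfin (hg_step c c')
      _ = (g c).toReal + max (c' - c) 0 * L.toReal := by
          rw [toReal_add (hg_fin c) (mul_ne_top ofReal_ne_top hL), toReal_mul, toReal_ofReal']
      _ ≤ (g c).toReal + L.toNNReal * dist c' c := by
          rw [coe_toNNReal_eq_toReal, Real.dist_eq, mul_comm]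
          gcongr
          exact max_le (le_abs_self _) (abs_nonneg _)
  have hg_bot : g (a i₀) = 0 := by
    refine measure_mono_null (fun x ⟨hxS, hx⟩ => ?_) measure_empty
    exact (not_le.2 hx) (hSQ hxS i₀ (mem_univ _)).1
  have hg_top : g (a i₀ + h) = volume S := by
    refine congrArg volume (inter_eq_left.2 fun x hxS => (hSQ hxS i₀ (mem_univ _)).2)
  obtain ⟨c, -, hc⟩ := intermediate_value_Icc (by linarith) hcont.continuousOn
    (show r.toReal ∈ Icc (g (a i₀)).toReal (g (a i₀ + h)).toReal from
      ⟨by simp [hg_bot], toReal_mono (hg_top ▸ hg_fin _) (hg_top ▸ hr)⟩)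
  refine ⟨S ∩ {x | x i₀ < c}, inter_subset_left,
    hS.inter (measurableSet_lt (measurable_pi_apply i₀) measurable_const), ?_⟩
  exact (toReal_eq_toReal_iff' (hg_fin c) (ne_top_of_le_ne_top (hg_top ▸ hg_fin _) hr)).1 hc

lemma tsum_volume_dyCube_le {D : Set (ℤ × (Fin n → ℤ))}
    (hD : D.PairwiseDisjoint fun q => dyCube q.1 q.2) {q : ℤ × (Fin n → ℤ)}
    (hDq : ∀ q' ∈ D, q'.1 ≤ q.1 ∧ (dyCubePlus q'.1 q'.2 ∩ dyCubePlus q.1 q.2).Nonempty) :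
    ∑' q' : D, volume (dyCube q'.1.1 q'.1.2) ≤ 2 ^ n * volume (dyCube q.1 q.2) := by
  rw [← measure_biUnion (to_countable D) hD fun q' _ => measurableSet_dyCube _ _]
  calc volume (⋃ q' ∈ D, dyCube q'.1 q'.2)
      ≤ volume (cube (fun i => q.2 i * 2 ^ q.1) (2 * 2 ^ q.1)) :=
        measure_mono <| iUnion₂_subset fun q' hq' =>
          dyCube_subset_cube_of_dyCubePlus_inter (hDq q' hq').1 (hDq q' hq').2
    _ = 2 ^ n * volume (dyCube q.1 q.2) := by
        rw [volume_cube, volume_dyCube, ofReal_mul zero_le_two, mul_pow, ofReal_ofNat]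

lemma add_tsum_volume_dyCube_le {D : Set (ℤ × (Fin n → ℤ))}
    (hD : D.PairwiseDisjoint fun q => dyCube q.1 q.2) {q : ℤ × (Fin n → ℤ)}
    (hDq : ∀ q' ∈ D, q'.1 ≤ q.1 ∧ (dyCubePlus q'.1 q'.2 ∩ dyCubePlus q.1 q.2).Nonempty) (t : ℝ) :
    ENNReal.ofReal t / 2 ^ (n + 1) * volume (dyCube q.1 q.2) +
        ∑' q' : D, ENNReal.ofReal t / 2 ^ (n + 1) * volume (dyCube q'.1.1 q'.1.2) ≤
      ENNReal.ofReal t * volume (dyCube q.1 q.2) := by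
  set c := ENNReal.ofReal t / 2 ^ (n + 1)
  set V := volume (dyCube q.1 q.2)
  have hc : c * 2 ^ (n + 1) = ENNReal.ofReal t :=
    ENNReal.div_mul_cancel (pow_ne_zero _ two_ne_zero) (pow_ne_top ofNat_ne_top)
  calc c * V + ∑' q' : D, c * volume (dyCube q'.1.1 q'.1.2) ≤ c * V + c * (2 ^ n * V) := by
        rw [ENNReal.tsum_mul_left]
        gcongr
        exact tsum_volume_dyCube_le hD hDq
    _ = c * (1 + 2 ^ n) * V := by ring
    _ ≤ c * 2 ^ (n + 1) * V := by
        gcongr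
        rw [pow_succ, mul_two]
        gcongr
        exact one_le_pow₀ one_le_two
    _ = ENNReal.ofReal t * V := by rw [hc]

lemma subsingleton_maximalCubes_fin_zero (S : Set (ℤ × (Fin 0 → ℤ))) :
    (maximalCubes S).Subsingleton := by
  intro q hq q' hq'
  by_contra hne
  obtain ⟨x, hx⟩ := dyCube_nonempty q.1 q.2
  obtain ⟨y, hy⟩ := dyCube_nonempty q'.1 q'.2
  exact disjoint_left.1 (pairwiseDisjoint_maximalCubes S hq hq' hne) hx
    (Subsingleton.elim y x ▸ hy)

/-- Truncating the scales to `|k| ≤ j` makes maximal cubes exist and gives the greedy choice a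
smallest scale to start from. -/
def selectedCubes (E : Set (Fin n → ℝ)) (t : ℝ) (j : ℕ) : Set (ℤ × (Fin n → ℤ)) :=
  {q | q.1.natAbs ≤ j ∧
    ENNReal.ofReal t * volume (dyCube q.1 q.2) < volume (E ∩ dyCubePlus q.1 q.2)}

lemma exists_disjoint_subsets_of_maximalCubes_of_pos (hn : 0 < n) (E : Set (Fin n → ℝ))
    (hE : MeasurableSet E) (t : ℝ) (j : ℕ) :
    ∃ A : ℤ × (Fin n → ℤ) → Set (Fin n → ℝ),
      (maximalCubes (selectedCubes E t j)).PairwiseDisjoint A ∧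
      ∀ q ∈ maximalCubes (selectedCubes E t j), A q ⊆ E ∩ dyCubePlus q.1 q.2 ∧
        MeasurableSet (A q) ∧
        ENNReal.ofReal t / 2 ^ (n + 1) * volume (dyCube q.1 q.2) ≤ volume (A q) := by
  set I := maximalCubes (selectedCubes E t j)
  set τ : ℤ × (Fin n → ℤ) → ℝ≥0∞ :=
    fun q => ENNReal.ofReal t / 2 ^ (n + 1) * volume (dyCube q.1 q.2)
  set T : ℤ × (Fin n → ℤ) → Set (Fin n → ℝ) := fun q => E ∩ dyCubePlus q.1 q.2
  set ℓ : ℤ × (Fin n → ℤ) → ℕ := fun q => (q.1 + j).toNat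
  have hscale {q} (hq : q ∈ I) : -(j : ℤ) ≤ q.1 ∧ q.1 ≤ j := by have := hq.1.1; omega
  have hT_fin (q) (_ : q ∈ I) : volume (T q) ≠ ∞ := by
    refine ne_top_of_le_ne_top ?_ (measure_mono inter_subset_right)
    rw [dyCubePlus_eq, volume_dyCube]
    exact pow_ne_top ofReal_ne_top
  have hdisj (q) (hq : q ∈ I) (q') (hq' : q' ∈ I) (hne : q ≠ q') (hℓ : ℓ q = ℓ q') :
      Disjoint (T q) (T q') := by
    have : (q.1 + j).toNat = (q'.1 + j).toNat := hℓ
    have := hscale hq; have := hscale hq'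
    exact (disjoint_dyCubePlus_of_fst_eq (by omega) hne).mono
      inter_subset_right inter_subset_right
  have hroom (q) (hq : q ∈ I) :
      τ q + ∑' q' : {q' | q' ∈ I ∧ ℓ q' < ℓ q ∧ (T q' ∩ T q).Nonempty}, τ q' ≤ volume (T q) := by
    set D := {q' | q' ∈ I ∧ q'.1 ≤ q.1 ∧ (dyCubePlus q'.1 q'.2 ∩ dyCubePlus q.1 q.2).Nonempty}
    calc _ ≤ τ q + ∑' q' : D, τ q' := by
          gcongr
          refine ENNReal.tsum_mono_subtype _ fun q' ⟨hq', hℓ, hmeet⟩ => ⟨hq', ?_, ?_⟩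
          · have : (q'.1 + j).toNat < (q.1 + j).toNat := hℓ
            have := hscale hq; have := hscale hq'; omega
          · exact hmeet.mono (inter_subset_inter inter_subset_right inter_subset_right)
      _ ≤ ENNReal.ofReal t * volume (dyCube q.1 q.2) :=
          add_tsum_volume_dyCube_le ((pairwiseDisjoint_maximalCubes _).subset fun _ h => h.1)
            (fun _ h => h.2) t
      _ ≤ volume (T q) := hq.1.2.le
  have hsplit (q) (_ : q ∈ I) (S) (hST : S ⊆ T q) (hS : MeasurableSet S) (hτS : τ q ≤ volume S) :
      ∃ A ⊆ S, MeasurableSet A ∧ volume A = τ q :=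
    exists_subset_volume_eq ⟨0, hn⟩ (zpow_nonneg zero_le_two _) hS
      (hST.trans (inter_subset_right.trans (dyCubePlus_eq q.1 q.2).subset)) hτS
  exact ⟨greedyPiece volume I ℓ T τ, pairwiseDisjoint_greedyPiece hdisj, fun q hq =>
    ⟨(greedyPiece_subset _ _ _ _ _ q).trans sdiff_subset, measurableSet_greedyPiece _ _ _ _ _ q,
      (measure_greedyPiece (fun q _ => hE.inter (measurableSet_dyCubePlus _ _)) hT_fin hroom
        hsplit hq).ge⟩⟩

lemma exists_disjoint_subsets_of_maximalCubes (E : Set (Fin n → ℝ)) (hE : MeasurableSet E)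
    (t : ℝ) (j : ℕ) :
    ∃ A : ℤ × (Fin n → ℤ) → Set (Fin n → ℝ),
      (maximalCubes (selectedCubes E t j)).PairwiseDisjoint A ∧
      ∀ q ∈ maximalCubes (selectedCubes E t j), A q ⊆ E ∩ dyCubePlus q.1 q.2 ∧
        MeasurableSet (A q) ∧
        ENNReal.ofReal t / 2 ^ (n + 1) * volume (dyCube q.1 q.2) ≤ volume (A q) := by
  rcases Nat.eq_zero_or_pos n with rfl | hn
  · -- the space is a point, so there is at most one maximal cube and `E ∩ Q⁺` itself will do
    refine ⟨fun q => E ∩ dyCubePlus q.1 q.2, (subsingleton_maximalCubes_fin_zero _).pairwise _,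
      fun q hq => ⟨subset_rfl, hE.inter (measurableSet_dyCubePlus _ _), le_trans ?_ hq.1.2.le⟩⟩
    exact mul_le_mul_left (ENNReal.div_le_of_le_mul (le_mul_of_one_le_right' (by norm_num))) _
  exact exists_disjoint_subsets_of_maximalCubes_of_pos hn E hE t j

/-- `(w, v) ∈ A_p^{+,d}(𝓡)` with constant `K`. -/
def RestrictedApPlusDyadic (p K : ℝ) (w v : (Fin n → ℝ) → ℝ≥0∞) : Prop :=
  ∀ (k : ℤ) (m : Fin n → ℤ), ∀ E ⊆ dyCubePlus k m, MeasurableSet E →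
    volume E / volume (dyCube k m)
      ≤ ENNReal.ofReal K * ((∫⁻ x in E, v x) / ∫⁻ x in dyCube k m, w x) ^ (1 / p)

variable {p K : ℝ} {w v : (Fin n → ℝ) → ℝ≥0∞}

lemma RestrictedApPlusDyadic.lintegral_mul_le (hwv : RestrictedApPlusDyadic p K w v) (hp : 0 < p)
    {k : ℤ} {m : Fin n → ℤ} {A : Set (Fin n → ℝ)} (hA : A ⊆ dyCubePlus k m)
    (hAm : MeasurableSet A) :
    (∫⁻ x in dyCube k m, w x) * (volume A / volume (dyCube k m)) ^ p ≤
      ENNReal.ofReal K ^ p * ∫⁻ x in A, v x := by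
  have h := rpow_le_rpow (hwv k m A hA hAm) hp.le
  rw [mul_rpow_of_nonneg _ _ hp.le, ← rpow_mul, one_div_mul_cancel hp.ne', rpow_one] at h
  calc _ ≤ (∫⁻ x in dyCube k m, w x) *
        (ENNReal.ofReal K ^ p * ((∫⁻ x in A, v x) / ∫⁻ x in dyCube k m, w x)) := by gcongr
    _ = ENNReal.ofReal K ^ p *
        ((∫⁻ x in dyCube k m, w x) * ((∫⁻ x in A, v x) / ∫⁻ x in dyCube k m, w x)) := by ring
    _ ≤ ENNReal.ofReal K ^ p * ∫⁻ x in A, v x := by gcongr; exact ENNReal.mul_div_le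

lemma volume_dyCube_ne_zero (k : ℤ) (m : Fin n → ℤ) : volume (dyCube k m) ≠ 0 := by
  rw [volume_dyCube]
  exact pow_ne_zero _ (ofReal_pos.2 (zpow_pos two_pos k)).ne'

lemma volume_dyCube_ne_top (k : ℤ) (m : Fin n → ℤ) : volume (dyCube k m) ≠ ∞ := by
  rw [volume_dyCube]
  exact pow_ne_top ofReal_ne_top

lemma RestrictedApPlusDyadic.mul_lintegral_selectedCubes_le (hwv : RestrictedApPlusDyadic p K w v)
    (hp : 0 < p) {E : Set (Fin n → ℝ)} (hE : MeasurableSet E) (t : ℝ) (j : ℕ) :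
    (ENNReal.ofReal t / 2 ^ (n + 1)) ^ p * ∫⁻ x in ⋃ q ∈ selectedCubes E t j, dyCube q.1 q.2, w x
      ≤ ENNReal.ofReal K ^ p * ∫⁻ x in E, v x := by
  obtain ⟨A, hA_disj, hA⟩ := exists_disjoint_subsets_of_maximalCubes E hE t j
  set I := maximalCubes (selectedCubes E t j)
  set c := ENNReal.ofReal t / 2 ^ (n + 1)
  have hcover : ⋃ q ∈ selectedCubes E t j, dyCube q.1 q.2 ⊆ ⋃ q : I, dyCube q.1.1 q.1.2 := by
    refine iUnion₂_subset fun q hq => ?_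
    obtain ⟨q', hq', hsub⟩ :=
      exists_maximalCubes_superset (fun q hq => (Int.le_natAbs).trans (Int.ofNat_le.2 hq.1)) hq
    exact hsub.trans (subset_iUnion_of_subset ⟨q', hq'⟩ subset_rfl)
  have hcube (q : I) : c ^ p * ∫⁻ x in dyCube q.1.1 q.1.2, w x ≤
      ENNReal.ofReal K ^ p * ∫⁻ x in A q, v x := by
    obtain ⟨hAQ, hAm, hAvol⟩ := hA q q.2
    have hc : c ≤ volume (A q) / volume (dyCube q.1.1 q.1.2) :=
      (ENNReal.le_div_iff_mul_le (.inl (volume_dyCube_ne_zero _ _))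
        (.inl (volume_dyCube_ne_top _ _))).2 hAvol
    calc c ^ p * ∫⁻ x in dyCube q.1.1 q.1.2, w x
        ≤ (∫⁻ x in dyCube q.1.1 q.1.2, w x) * (volume (A q) / volume (dyCube q.1.1 q.1.2)) ^ p := by
          rw [mul_comm]; gcongr
      _ ≤ ENNReal.ofReal K ^ p * ∫⁻ x in A q, v x :=
          hwv.lintegral_mul_le hp (hAQ.trans inter_subset_right) hAm
  calc c ^ p * ∫⁻ x in ⋃ q ∈ selectedCubes E t j, dyCube q.1 q.2, w x
      ≤ c ^ p * ∑' q : I, ∫⁻ x in dyCube q.1.1 q.1.2, w x :=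
        by gcongr; exact (lintegral_mono_set hcover).trans (lintegral_iUnion_le _ _)
    _ ≤ ENNReal.ofReal K ^ p * ∑' q : I, ∫⁻ x in A q, v x := by
        rw [← ENNReal.tsum_mul_left, ← ENNReal.tsum_mul_left]
        exact ENNReal.tsum_le_tsum hcube
    _ ≤ ENNReal.ofReal K ^ p * ∫⁻ x in E, v x := by
        rw [← lintegral_biUnion (to_countable I) (fun q hq => (hA q hq).2.1) hA_disj]
        gcongr
        exact iUnion₂_subset fun q hq => (hA q hq).1.trans inter_subset_left

lemma le_rpow_div_mul_of_div_rpow_mul_le {a b x y : ℝ≥0∞} {p : ℝ} (hp : 0 ≤ p) (ha : a ≠ 0)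
    (ha' : a ≠ ∞) (hb : b ≠ 0) (hb' : b ≠ ∞) (h : (a / b) ^ p * x ≤ y) :
    x ≤ b ^ p / a ^ p * y := by
  have hab : 0 < a / b := div_pos_iff.2 ⟨ha, hb'⟩
  rw [mul_comm, ← ENNReal.le_div_iff_mul_le (.inl (rpow_pos hab (div_ne_top ha' hb)).ne')
    (.inl (rpow_ne_top_of_nonneg hp (div_ne_top ha' hb)))] at h
  rw [div_rpow_of_nonneg _ _ hp, ← ENNReal.div_mul _
    (.inl (rpow_pos (pos_iff_ne_zero.2 ha) ha').ne') (.inl (rpow_ne_top_of_nonneg hp ha')),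
    div_eq_mul_inv] at h
  calc x ≤ y * (a ^ p)⁻¹ * b ^ p := h
    _ = b ^ p / a ^ p * y := by rw [div_eq_mul_inv]; ring

lemma RestrictedApPlusDyadic.lintegral_selectedCubes_le (hwv : RestrictedApPlusDyadic p K w v)
    (hp : 0 < p) {E : Set (Fin n → ℝ)} (hE : MeasurableSet E) {t : ℝ} (ht : 0 < t) (j : ℕ) :
    ∫⁻ x in ⋃ q ∈ selectedCubes E t j, dyCube q.1 q.2, w x ≤
      ENNReal.ofReal ((2 ^ (n + 1)) ^ p) * ENNReal.ofReal K ^ p / ENNReal.ofReal t ^ p *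
        ∫⁻ x in E, v x := by
  have hB : ENNReal.ofReal ((2 ^ (n + 1)) ^ p) = (2 ^ (n + 1)) ^ p := by
    rw [← ofReal_rpow_of_nonneg (by positivity) hp.le, ofReal_pow zero_le_two, ofReal_ofNat]
  calc _ ≤ (2 ^ (n + 1)) ^ p / ENNReal.ofReal t ^ p * (ENNReal.ofReal K ^ p * ∫⁻ x in E, v x) :=
        le_rpow_div_mul_of_div_rpow_mul_le hp.le (ofReal_pos.2 ht).ne' ofReal_ne_top
          (by simp) (by simp) (hwv.mul_lintegral_selectedCubes_le hp hE t j)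
    _ = _ := by rw [hB]; simp only [div_eq_mul_inv]; ring

lemma setOf_lt_Mplusd_subset (E : Set (Fin n → ℝ)) (t : ℝ) :
    {x | ENNReal.ofReal t < Mplusd E x} ⊆ ⋃ j, ⋃ q ∈ selectedCubes E t j, dyCube q.1 q.2 := by
  intro x hx
  simp only [Mplusd, lt_iSup_iff] at hx
  obtain ⟨k, m, hxQ, hlt⟩ := hx
  rw [ENNReal.lt_div_iff_mul_lt (.inl (volume_dyCube_ne_zero k m))
    (.inl (volume_dyCube_ne_top k m))] at hlt
  exact mem_iUnion.2 ⟨k.natAbs, mem_biUnion (x := (k, m)) ⟨le_rfl, hlt⟩ hxQ⟩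

lemma monotone_selectedCubes (E : Set (Fin n → ℝ)) (t : ℝ) :
    Monotone (selectedCubes E t) :=
  fun _ _ hj _ hq => ⟨hq.1.trans hj, hq.2⟩

/-- If `(w,v) ∈ A_p^{+,d}(𝓡)` with constant `K`, then `M^{+,d}` satisfies the restricted
weak `(p,p)` type inequality with a constant `C` depending only on `n` and `p`:
`w({M^{+,d}χ_E > t}) ≤ C K^p t⁻ᵖ v(E)`. -/
theorem restricted_Apd_implies_weak_type (n : ℕ) (p : ℝ) (hp : 1 ≤ p) :
    ∃ C : ℝ, 0 < C ∧
      ∀ (w v : (Fin n → ℝ) → ℝ≥0∞), Measurable w → Measurable v →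
      ∀ K : ℝ, 0 ≤ K →
      (∀ (k : ℤ) (m : Fin n → ℤ), ∀ E ⊆ dyCubePlus k m, MeasurableSet E →
        volume E / volume (dyCube k m)
          ≤ ENNReal.ofReal K *
            ((∫⁻ x in E, v x) / ∫⁻ x in dyCube k m, w x) ^ (1 / p)) →
      ∀ t : ℝ, 0 < t → ∀ E : Set (Fin n → ℝ), MeasurableSet E →
        ∫⁻ x in {x | ENNReal.ofReal t < Mplusd E x}, w x
          ≤ ENNReal.ofReal C * ENNReal.ofReal K ^ p / ENNReal.ofReal t ^ p *
            ∫⁻ x in E, v x := by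
  have hp₀ : 0 < p := by linarith
  refine ⟨(2 ^ (n + 1)) ^ p, by positivity, fun w v _ _ K _ hwv t ht E hE => ?_⟩
  calc ∫⁻ x in {x | ENNReal.ofReal t < Mplusd E x}, w x
      ≤ ∫⁻ x in ⋃ j, ⋃ q ∈ selectedCubes E t j, dyCube q.1 q.2, w x :=
        lintegral_mono_set (setOf_lt_Mplusd_subset E t)
    _ = ⨆ j, ∫⁻ x in ⋃ q ∈ selectedCubes E t j, dyCube q.1 q.2, w x :=
        setLIntegral_iUnion_of_directed _ (Monotone.directed_le fun _ _ hj =>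
          biUnion_subset_biUnion_left (monotone_selectedCubes E t hj))
    _ ≤ _ := iSup_le (RestrictedApPlusDyadic.lintegral_selectedCubes_le (p := p) hwv hp₀ hE ht)
end
end
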